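/- Let α > 0. There exists d₀ > 2 depending only on α such that for all d ≥ d₀ and all θ > 0 with (d+1)θ < π/2, with I = (0,θ), J = (dθ,(d+1)θ) arcs of 𝕋 and c the center of Q_I, one has for every z ∈ Q_J and λ ∈ Q_I: |(1 − z·conj(λ))^{−α} − (1 − z·conj(c))^{−α}| ≤ (1/2)|1 − z·conj(c)|^{−α}. -/

import Mathlib

/-!
Put `A = 1 - z c̄` and `B = 1 - z λ̄`. Since `Re A > 0`, the principal branch splits as
`B^{-α} = A^{-α} (B/A)^{-α}`, so it suffices that `B/A` is close to `1`. The point `z c̄` makes an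
angle at least `(d - 1/2)θ` with the positive axis, so `|A| ≥ sin((d - 1/2)θ) ≥ dθ/4` by Jordan's
inequality, while `|B - A| ≤ |c - λ| ≤ 2θ` because `c` and `λ` both lie in `Q_I`. Hence
`|B/A - 1| ≤ 8/d`, and `|(B/A)^{-α} - 1| ≤ 24α/d ≤ 1/2` once `d ≥ 96α + 16`.
-/


open MeasureTheory Complex Set
open scoped ENNReal Real

noncomputable section

/-- The open unit disk in the complex plane. -/
def unitDisk : Set ℂ := Metric.ball 0 1

/-- The normalized area measure `dA = (1/π) dx dy` on `ℂ`. -/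
def dA : Measure ℂ := (ENNReal.ofReal π)⁻¹ • (volume : Measure ℂ)

/-- The Carleson box `Q_I` associated with the arc `I = {e^{iθ} : θ ∈ [t, t + ℓ)}`
of the unit circle: `Q_I = {z ∈ 𝔻 : z/|z| ∈ I, 1 - |I| < |z| < 1}`. -/
def carlesonBox (t ℓ : ℝ) : Set ℂ :=
  {z : ℂ | z ∈ unitDisk ∧ 1 - ℓ < ‖z‖ ∧
    ∃ θ ∈ Set.Ico t (t + ℓ), z / (‖z‖ : ℂ) = Complex.exp (θ * Complex.I)}

/-- The measure `ω dA` restricted to the unit disk, so that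
`wMeasure ω S = |S ∩ 𝔻|_ω = ∫_{S ∩ 𝔻} ω dA`. -/
def wMeasure (ω : ℂ → ℝ) : Measure ℂ :=
  (dA.restrict unitDisk).withDensity fun z => ENNReal.ofReal (ω z)

/-- A weight on the unit disk: a positive integrable function. -/
def IsWeight (ω : ℂ → ℝ) : Prop :=
  (∀ z ∈ unitDisk, 0 < ω z) ∧ IntegrableOn ω unitDisk dA

/-- The integral operator `K_α` induced by the kernel `(1 - z λ̄)^{-α}`. -/
def Kop (α : ℝ) (f : ℂ → ℂ) (z : ℂ) : ℂ :=
  ∫ w in unitDisk, f w * (1 - z * (starRingEnd ℂ) w) ^ (-(α : ℂ)) ∂dA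

open scoped ComplexConjugate

namespace Complex

theorem norm_cpow_sub_cpow_le {A B s : ℂ} {ε : ℝ} (hA : 0 < A.re)
    (hBA : ‖B - A‖ ≤ ε * ‖A‖) (hε : ε ≤ 1 / 2) (hεs : 3 / 2 * ε * ‖s‖ ≤ 1) :
    ‖B ^ s - A ^ s‖ ≤ 3 * ε * ‖s‖ * ‖A ^ s‖ := by
  have hA0 : A ≠ 0 := fun h => by simp [h] at hA
  set u := (B - A) / A
  have hu : ‖u‖ ≤ ε := by
    rw [norm_div, div_le_iff₀ (norm_pos_iff.mpr hA0)]; exact hBA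
  have hB : B = A * (1 + u) := by simp only [u]; field_simp; ring
  have hu_re : 0 < (1 + u).re := by
    have := neg_le_of_abs_le ((abs_re_le_norm u).trans hu)
    simp only [add_re, one_re]; linarith
  have hv0 : 1 + u ≠ 0 := fun h => by simp [h] at hu_re
  have hlog : log B = log A + log (1 + u) := by
    rw [hB, log_mul_eq_add_log_iff hA0 hv0]
    have hargA := abs_lt.mp (abs_arg_lt_pi_div_two_iff.mpr (Or.inl hA))
    have hargv := abs_lt.mp (abs_arg_lt_pi_div_two_iff.mpr (Or.inl hu_re))
    constructor <;> linarith [Real.pi_pos]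
  have hexp : ‖log (1 + u) * s‖ ≤ 3 / 2 * ε * ‖s‖ := by
    rw [norm_mul]
    gcongr
    exact (norm_log_one_add_half_le_self (hu.trans hε)).trans (by gcongr)
  calc ‖B ^ s - A ^ s‖ = ‖A ^ s‖ * ‖exp (log (1 + u) * s) - 1‖ := by
        rw [← norm_mul, mul_sub, mul_one, cpow_def_of_ne_zero hA0, ← exp_add, ← add_mul, ← hlog,
          cpow_def_of_ne_zero (hB ▸ mul_ne_zero hA0 hv0)]
    _ ≤ ‖A ^ s‖ * (2 * (3 / 2 * ε * ‖s‖)) := by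
        gcongr
        exact (norm_exp_sub_one_le (hexp.trans hεs)).trans (by gcongr)
    _ = 3 * ε * ‖s‖ * ‖A ^ s‖ := by ring

theorem norm_exp_ofReal_mul_I_sub_exp_ofReal_mul_I_le (a b : ℝ) :
    ‖exp (a * I) - exp (b * I)‖ ≤ |a - b| := by
  have h : exp (a * I) - exp (b * I) = exp (b * I) * (exp (I * (a - b : ℝ)) - 1) := by
    rw [mul_sub, ← exp_add]; push_cast; ring_nf
  rw [h, norm_mul, norm_exp_ofReal_mul_I, one_mul, ← Real.norm_eq_abs]
  exact Real.norm_exp_I_mul_ofReal_sub_one_le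

theorem ofReal_mul_exp_mul_conj_ofReal_mul_exp (ρ r σ τ : ℝ) :
    (ρ * exp (σ * I)) * conj (r * exp (τ * I)) = (ρ * r : ℝ) * exp ((σ - τ : ℝ) * I) := by
  rw [map_mul, conj_ofReal, ← exp_conj, map_mul, conj_ofReal, conj_I, mul_mul_mul_comm,
    ← exp_add]
  push_cast; ring_nf

theorem abs_sin_le_norm_one_sub_ofReal_mul_exp (r φ : ℝ) :
    |Real.sin φ| ≤ ‖1 - r * exp (φ * I)‖ := by
  rw [← abs_norm, ← sq_le_sq, Complex.sq_norm, normSq_apply]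
  simp only [sub_re, sub_im, one_re, one_im, mul_re, mul_im, ofReal_re, ofReal_im,
    exp_ofReal_mul_I_re, exp_ofReal_mul_I_im]
  nlinarith [Real.sin_sq_add_cos_sq φ, sq_nonneg (r - Real.cos φ)]

theorem mul_le_norm_one_sub_mul_conj (ρ r σ τ : ℝ) (hστ : τ ≤ σ) (hστ' : σ - τ ≤ π / 2) :
    2 / π * (σ - τ) ≤ ‖1 - (ρ * exp (σ * I)) * conj (r * exp (τ * I))‖ := by
  rw [ofReal_mul_exp_mul_conj_ofReal_mul_exp]
  exact (Real.mul_le_sin (sub_nonneg.mpr hστ) hστ').trans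
    ((le_abs_self _).trans (abs_sin_le_norm_one_sub_ofReal_mul_exp _ _))

end Complex

open Complex

theorem re_one_sub_mul_conj_pos {z w : ℂ} (hz : z ∈ unitDisk) (hw : w ∈ unitDisk) :
    0 < (1 - z * conj w).re := by
  rw [unitDisk, mem_ball_zero_iff] at hz hw
  have : ‖z * conj w‖ < 1 := by
    rw [norm_mul, RCLike.norm_conj]
    nlinarith [norm_nonneg z, norm_nonneg w]
  simp only [sub_re, one_re]
  linarith [re_le_norm (z * conj w)]

theorem exists_eq_norm_mul_exp_of_mem_carlesonBox {t ℓ : ℝ} {z : ℂ} (hz : z ∈ carlesonBox t ℓ) :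
    ∃ σ ∈ Ico t (t + ℓ), z = ‖z‖ * exp (σ * I) := by
  obtain ⟨-, -, σ, hσ, hzσ⟩ := hz
  have hz0 : (‖z‖ : ℂ) ≠ 0 := by
    rintro h
    rw [h, div_zero] at hzσ
    exact exp_ne_zero _ hzσ.symm
  exact ⟨σ, hσ, by rw [← hzσ, mul_div_cancel₀ _ hz0]⟩

theorem norm_sub_le_of_mem_carlesonBox {t ℓ : ℝ} {z w : ℂ} (hz : z ∈ carlesonBox t ℓ)
    (hw : w ∈ carlesonBox t ℓ) : ‖z - w‖ ≤ 2 * ℓ := by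
  obtain ⟨σ, hσ, hzσ⟩ := exists_eq_norm_mul_exp_of_mem_carlesonBox hz
  obtain ⟨τ, hτ, hwτ⟩ := exists_eq_norm_mul_exp_of_mem_carlesonBox hw
  obtain ⟨hz1, hzℓ, -⟩ := hz
  obtain ⟨hw1, hwℓ, -⟩ := hw
  rw [unitDisk, mem_ball_zero_iff] at hz1 hw1
  have hsplit : z - w = (‖z‖ - ‖w‖ : ℝ) * exp (σ * I) + ‖w‖ * (exp (σ * I) - exp (τ * I)) := by
    conv_lhs => rw [hzσ, hwτ]
    push_cast; ring
  have hangle : |σ - τ| ≤ ℓ := by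
    rw [abs_le]; constructor <;> linarith [hσ.1, hσ.2, hτ.1, hτ.2]
  have hradius : |‖z‖ - ‖w‖| ≤ ℓ := by
    rw [abs_le]; constructor <;> linarith
  calc ‖z - w‖ ≤ |‖z‖ - ‖w‖| + ‖w‖ * |σ - τ| := by
        rw [hsplit]
        refine (norm_add_le _ _).trans (add_le_add ?_ ?_)
        · rw [norm_mul, norm_exp_ofReal_mul_I, mul_one, norm_real, Real.norm_eq_abs]
        · rw [norm_mul, norm_real, norm_norm]
          gcongr
          exact norm_exp_ofReal_mul_I_sub_exp_ofReal_mul_I_le σ τ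
    _ ≤ ℓ + 1 * ℓ := by gcongr
    _ = 2 * ℓ := by ring

theorem center_mem_carlesonBox (t : ℝ) {ℓ : ℝ} (hℓ : 0 < ℓ) (hℓ' : ℓ < 2) :
    ((1 - ℓ / 2 : ℝ) : ℂ) * exp ((t + ℓ / 2 : ℝ) * I) ∈ carlesonBox t ℓ := by
  have hnorm : ‖((1 - ℓ / 2 : ℝ) : ℂ) * exp ((t + ℓ / 2 : ℝ) * I)‖ = 1 - ℓ / 2 := by
    rw [norm_mul, norm_exp_ofReal_mul_I, mul_one, norm_real, Real.norm_of_nonneg (by linarith)]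
  refine ⟨?_, ?_, t + ℓ / 2, ⟨by linarith, by linarith⟩, ?_⟩
  · rw [unitDisk, mem_ball_zero_iff, hnorm]; linarith
  · rw [hnorm]; linarith
  · rw [hnorm, mul_div_cancel_left₀ _ (ofReal_ne_zero.mpr (by linarith))]

theorem norm_one_sub_mul_conj_sub_one_sub_mul_conj_le {z w c : ℂ} (hz : ‖z‖ ≤ 1) :
    ‖(1 - z * conj w) - (1 - z * conj c)‖ ≤ ‖c - w‖ :=
  calc ‖(1 - z * conj w) - (1 - z * conj c)‖ = ‖z‖ * ‖c - w‖ := by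
        rw [← RCLike.norm_conj (c - w), ← norm_mul, map_sub]; ring_nf
    _ ≤ ‖c - w‖ := mul_le_of_le_one_left (norm_nonneg _) hz

theorem div_four_le_norm_one_sub_mul_conj_center {d θ : ℝ} {z : ℂ} (hd : 1 ≤ d) (hθ : 0 ≤ θ)
    (hdθ : (d + 1) * θ ≤ π / 2) (hz : z ∈ carlesonBox (d * θ) θ) :
    d * θ / 4 ≤ ‖1 - z * conj (((1 - θ / 2 : ℝ) : ℂ) * exp ((θ / 2 : ℝ) * I))‖ := by
  obtain ⟨σ, hσ, hzσ⟩ := exists_eq_norm_mul_exp_of_mem_carlesonBox hz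
  have hσ' : d * θ ≤ σ ∧ σ < (d + 1) * θ := by simpa [add_mul] using hσ
  have hangle : 0 ≤ σ - θ / 2 := by nlinarith
  rw [hzσ]
  refine le_trans ?_ (mul_le_norm_one_sub_mul_conj _ _ _ _ (by linarith) (by linarith))
  have h2π : 1 / 2 ≤ 2 / π := by rw [le_div_iff₀ Real.pi_pos]; linarith [Real.pi_le_four]
  nlinarith [mul_le_mul_of_nonneg_right h2π hangle]

/-- For `α > 0` there is `d₀ > 2` depending only on `α` such that for all `d ≥ d₀` and
`(d+1)θ < π/2`, with `I = (0,θ)`, `J = (dθ,(d+1)θ)` and `c = (1 - θ/2)e^{iθ/2}` the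
center of `Q_I`, every `z ∈ Q_J` and `λ ∈ Q_I` satisfy
`|(1 - z λ̄)^{-α} - (1 - z c̄)^{-α}| ≤ (1/2)|1 - z c̄|^{-α}`. -/
theorem stmt7 (α : ℝ) (hα : 0 < α) :
    ∃ d₀ : ℝ, 2 < d₀ ∧
      ∀ d : ℝ, d₀ ≤ d → ∀ θ : ℝ, 0 < θ → (d + 1) * θ < π / 2 →
        ∀ z ∈ carlesonBox (d * θ) θ, ∀ w ∈ carlesonBox 0 θ,
          ‖(1 - z * (starRingEnd ℂ) w) ^ (-(α : ℂ)) -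
              (1 - z * (starRingEnd ℂ)
                (((1 - θ / 2 : ℝ) : ℂ) * Complex.exp ((θ / 2 : ℝ) * Complex.I))) ^ (-(α : ℂ))‖ ≤
            (1 / 2) * ‖(1 - z * (starRingEnd ℂ)
                (((1 - θ / 2 : ℝ) : ℂ) * Complex.exp ((θ / 2 : ℝ) * Complex.I))) ^ (-(α : ℂ))‖ := by
  refine ⟨96 * α + 16, by linarith, fun d hd θ hθ hdθ z hz w hw => ?_⟩
  set c : ℂ := ((1 - θ / 2 : ℝ) : ℂ) * exp ((θ / 2 : ℝ) * I)
  have hd16 : 16 ≤ d := by linarith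
  have hθ2 : θ < 2 := by nlinarith [Real.pi_le_four]
  have hc : c ∈ carlesonBox 0 θ := by
    have := center_mem_carlesonBox 0 hθ hθ2
    rwa [zero_add] at this
  have hA : d * θ / 4 ≤ ‖1 - z * conj c‖ :=
    div_four_le_norm_one_sub_mul_conj_center (by linarith) hθ.le hdθ.le hz
  have hBA : ‖(1 - z * conj w) - (1 - z * conj c)‖ ≤ 2 * θ :=
    (norm_one_sub_mul_conj_sub_one_sub_mul_conj_le (mem_ball_zero_iff.mp hz.1).le).trans
      (norm_sub_le_of_mem_carlesonBox hc hw)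
  have hε : ‖(1 - z * conj w) - (1 - z * conj c)‖ ≤ 8 / d * ‖1 - z * conj c‖ := by
    refine hBA.trans ?_
    rw [div_mul_eq_mul_div, le_div_iff₀ (by linarith)]
    linarith
  have hαd : 3 * (8 / d) * ‖-(α : ℂ)‖ ≤ 1 / 2 := by
    rw [norm_neg, norm_real, Real.norm_of_nonneg hα.le, mul_div_assoc', div_mul_eq_mul_div,
      div_le_iff₀ (by linarith)]
    linarith
  refine (norm_cpow_sub_cpow_le (re_one_sub_mul_conj_pos hz.1 hc.1) hε ?_ ?_).trans ?_
  · rw [div_le_iff₀ (by linarith)]; linarith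
  · linarith
  · gcongr
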